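/- Let P ⊆ ℝ^d be a finite β-stable instance for k-means, and let {C_1,…,C_k} be a partition of P with centroids a_1,…,a_k whose k-means cost is at most (1+β/2)·OPT_k. Let S ⊂ ℝ^d be a set of k centers and x ∈ S, and let I(x) be the set of clusters C_j such that cost(a_j,x) ≥ 32·Δ_j and cost(a_j,x) ≤ 16·cost(a_j,S), where Δ_j := cost(C_j,a_j)/|C_j|. Then cost(P,S) ≥ (1/768)·(|I(x)| − 1)·β·OPT_k. -/

import Mathlib

open Finset

noncomputable section

/-- `ℝ^d` as a Euclidean space. -/
abbrev Pt (d : ℕ) := EuclideanSpace ℝ (Fin d)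

/-- `cost(p,S) = min_{s ∈ S} ‖p - s‖²`. -/
noncomputable def pcost {d : ℕ} (p : Pt d) (S : Finset (Pt d)) : ℝ :=
  sInf ((fun s => ‖p - s‖ ^ 2) '' (S : Set (Pt d)))

/-- `cost(P,S) = ∑_{p ∈ P} min_{s ∈ S} ‖p - s‖²`. -/
noncomputable def scost {d : ℕ} (P S : Finset (Pt d)) : ℝ :=
  ∑ p ∈ P, pcost p S

/-- `OPT_j`: the optimal k-means cost of `P` with `j` centers. -/
noncomputable def kmOPT {d : ℕ} (P : Finset (Pt d)) (j : ℕ) : ℝ :=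
  sInf ((fun S : Finset (Pt d) => scost P S) '' {S : Finset (Pt d) | S.card = j})

/-!
Let `m j := |C_j| ‖a_j - x‖²`. Replacing the centers `a_j, a_j'` of two clusters
by the single center `x` gives a `(k-1)`-clustering of cost at most
`cost(C) + m j + m j' ≤ (1 + β/2) OPT_k + m j + m j'`, so stability forces
`m j + m j' ≥ (β/2) OPT_k`. Hence all clusters of `I(x)` except the one minimising `m` have
`m j ≥ (β/4) OPT_k`. On the other hand, for `j ∈ I(x)` the points of `C_j` are on average close
to `a_j` and `a_j` is far from `S`, which gives `cost(C_j, S) ≥ m j / 192`.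
-/

section Centroid

variable {E : Type*} [NormedAddCommGroup E] [InnerProductSpace ℝ E]

def clusterCentroid (C : Finset E) : E := (#C : ℝ)⁻¹ • ∑ p ∈ C, p

lemma sum_sub_clusterCentroid (C : Finset E) : ∑ p ∈ C, (p - clusterCentroid C) = 0 := by
  rcases C.eq_empty_or_nonempty with rfl | hC
  · simp
  · have hcard : (#C : ℝ) ≠ 0 := by exact_mod_cast hC.card_pos.ne'
    rw [sum_sub_distrib, sum_const, ← Nat.cast_smul_eq_nsmul ℝ, clusterCentroid,
      smul_inv_smul₀ hcard, sub_self]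

lemma sum_norm_sub_sq_eq (C : Finset E) (x : E) :
    ∑ p ∈ C, ‖p - x‖ ^ 2
      = ∑ p ∈ C, ‖p - clusterCentroid C‖ ^ 2 + #C * ‖clusterCentroid C - x‖ ^ 2 := by
  have hsplit : ∀ p, ‖p - x‖ ^ 2 = ‖p - clusterCentroid C‖ ^ 2
      + 2 * inner ℝ (p - clusterCentroid C) (clusterCentroid C - x)
      + ‖clusterCentroid C - x‖ ^ 2 := fun p => by
    rw [← norm_add_sq_real, sub_add_sub_cancel]
  have hcross : ∑ p ∈ C, 2 * inner ℝ (p - clusterCentroid C) (clusterCentroid C - x) = 0 := by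
    rw [← mul_sum, ← sum_inner, sum_sub_clusterCentroid, inner_zero_left, mul_zero]
  rw [sum_congr rfl fun p _ => hsplit p, sum_add_distrib, sum_add_distrib, hcross, add_zero,
    sum_const, nsmul_eq_mul]

end Centroid

lemma norm_sub_sq_le {E : Type*} [SeminormedAddCommGroup E] (a p s : E) :
    ‖a - s‖ ^ 2 ≤ 3 / 2 * ‖p - a‖ ^ 2 + 3 * ‖p - s‖ ^ 2 := by
  have htri : ‖a - s‖ ≤ ‖p - a‖ + ‖p - s‖ := by
    simpa only [norm_sub_rev a p] using norm_sub_le_norm_sub_add_norm_sub a p s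
  nlinarith [norm_nonneg (a - s), sq_nonneg (‖p - a‖ - 2 * ‖p - s‖)]

section Cost

variable {d : ℕ}

lemma pcost_bddBelow (p : Pt d) (S : Finset (Pt d)) :
    BddBelow ((fun s => ‖p - s‖ ^ 2) '' (S : Set (Pt d))) :=
  ⟨0, by rintro _ ⟨s, -, rfl⟩; positivity⟩

lemma pcost_nonneg (p : Pt d) (S : Finset (Pt d)) : 0 ≤ pcost p S :=
  Real.sInf_nonneg (by rintro _ ⟨s, -, rfl⟩; positivity)

@[simp]
lemma pcost_empty (p : Pt d) : pcost p ∅ = 0 := by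
  simp [pcost]

lemma pcost_le_of_mem {p s : Pt d} {S : Finset (Pt d)} (hs : s ∈ S) :
    pcost p S ≤ ‖p - s‖ ^ 2 :=
  csInf_le (pcost_bddBelow p S) ⟨s, hs, rfl⟩

lemma exists_mem_pcost_eq (p : Pt d) {S : Finset (Pt d)} (hS : S.Nonempty) :
    ∃ s ∈ S, ‖p - s‖ ^ 2 = pcost p S :=
  ((coe_nonempty.2 hS).image _).csInf_mem ((S.finite_toSet).image _)

lemma pcost_anti (p : Pt d) {T T' : Finset (Pt d)} (hTT' : T ⊆ T') (hT : T.Nonempty) :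
    pcost p T' ≤ pcost p T := by
  obtain ⟨s, hs, hps⟩ := exists_mem_pcost_eq p hT
  exact hps ▸ pcost_le_of_mem (hTT' hs)

lemma pcost_le_add (a p : Pt d) (S : Finset (Pt d)) :
    pcost a S ≤ 3 / 2 * ‖p - a‖ ^ 2 + 3 * pcost p S := by
  rcases S.eq_empty_or_nonempty with rfl | hS
  · simp only [pcost_empty]
    positivity
  · obtain ⟨s, hs, hps⟩ := exists_mem_pcost_eq p hS
    rw [← hps]
    exact (pcost_le_of_mem hs).trans (norm_sub_sq_le a p s)

lemma scost_nonneg (P S : Finset (Pt d)) : 0 ≤ scost P S :=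
  sum_nonneg fun p _ => pcost_nonneg p S

lemma scost_anti (P : Finset (Pt d)) {T T' : Finset (Pt d)} (hTT' : T ⊆ T') (hT : T.Nonempty) :
    scost P T' ≤ scost P T :=
  sum_le_sum fun p _ => pcost_anti p hTT' hT

lemma kmOPT_nonneg (P : Finset (Pt d)) (j : ℕ) : 0 ≤ kmOPT P j :=
  Real.sInf_nonneg (by rintro _ ⟨T, -, rfl⟩; exact scost_nonneg P T)

lemma kmOPT_le_scost (P : Finset (Pt d)) {T : Finset (Pt d)} : kmOPT P #T ≤ scost P T :=
  csInf_le ⟨0, by rintro _ ⟨T', -, rfl⟩; exact scost_nonneg P T'⟩ ⟨T, rfl, rfl⟩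

/-- If `Pt d` has fewer than `j` points, `kmOPT P j` is the junk value `sInf ∅ = 0`. -/
lemma kmOPT_le_scost_of_card_le (P : Finset (Pt d)) {j : ℕ} {T : Finset (Pt d)}
    (hT : T.Nonempty) (hcard : #T ≤ j) : kmOPT P j ≤ scost P T := by
  suffices h : (∃ T', T ⊆ T' ∧ #T' = j) ∨ kmOPT P j = 0 by
    rcases h with ⟨T', hTT', rfl⟩ | h
    · exact (kmOPT_le_scost P).trans (scost_anti P hTT' hT)
    · exact h ▸ scost_nonneg P T
  rcases finite_or_infinite (Pt d) with hfin | hinf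
  · have := Fintype.ofFinite (Pt d)
    by_cases hj : j ≤ Fintype.card (Pt d)
    · exact .inl (exists_superset_card_eq hcard hj)
    · refine .inr ?_
      have hnone : {T' : Finset (Pt d) | #T' = j} = ∅ :=
        Set.eq_empty_of_forall_notMem fun T' hT' => hj (hT' ▸ card_le_univ T')
      rw [kmOPT, hnone, Set.image_empty, Real.sInf_empty]
  · exact .inl (Infinite.exists_superset_card_eq T j hcard)

end Cost

section Clustering

variable {d : ℕ} {ι : Type*} [Fintype ι] [DecidableEq ι] (P : Finset (Pt d)) (cl : Pt d → ι)

lemma scost_eq_sum_clusters (S : Finset (Pt d)) :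
    scost P S = ∑ i, scost (P.filter fun p => cl p = i) S :=
  (sum_fiberwise P cl fun p => pcost p S).symm

lemma scost_le_sum_clusters {T : Finset (Pt d)} (c : ι → Pt d) (hc : ∀ i, c i ∈ T) :
    scost P T ≤ ∑ i, ∑ p ∈ P.filter (fun p => cl p = i), ‖p - c i‖ ^ 2 := by
  rw [scost_eq_sum_clusters P cl]
  exact sum_le_sum fun i _ => sum_le_sum fun p _ => pcost_le_of_mem (hc i)

end Clustering

lemma half_mul_kmOPT_le_merge_cost {d k : ℕ} (P : Finset (Pt d)) {β : ℝ} {cl : Pt d → Fin k}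
    (hstable : kmOPT P k * (1 + β) ≤ kmOPT P (k - 1))
    (happrox : ∑ i, ∑ p ∈ P.filter (fun p => cl p = i),
      ‖p - clusterCentroid (P.filter fun p => cl p = i)‖ ^ 2 ≤ (1 + β / 2) * kmOPT P k)
    {j j' : Fin k} (hjj' : j ≠ j') (x : Pt d) :
    β / 2 * kmOPT P k ≤
      #(P.filter fun p => cl p = j) * ‖clusterCentroid (P.filter fun p => cl p = j) - x‖ ^ 2
      + #(P.filter fun p => cl p = j') *
        ‖clusterCentroid (P.filter fun p => cl p = j') - x‖ ^ 2 := by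
  classical
  set C : Fin k → Finset (Pt d) := fun i => P.filter fun p => cl p = i
  set c : Fin k → Pt d := fun i => if i = j ∨ i = j' then x else clusterCentroid (C i)
  have hcard : #(univ.image c) ≤ k - 1 := by
    have hsub : univ.image c ⊆ (univ.erase j').image c := by
      intro y hy
      obtain ⟨i, -, rfl⟩ := mem_image.1 hy
      by_cases hi : i = j'
      · have hcc : c j = c i := by simp [c, hi]
        exact hcc ▸ mem_image_of_mem c (mem_erase.2 ⟨hjj', mem_univ j⟩)
      · exact mem_image_of_mem c (mem_erase.2 ⟨hi, mem_univ i⟩)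
    calc #(univ.image c) ≤ #((univ.erase j').image c) := card_le_card hsub
      _ ≤ #(univ.erase j') := card_image_le
      _ = k - 1 := by rw [card_erase_of_mem (mem_univ _), card_univ, Fintype.card_fin]
  have hextra : ∑ i, (#(C i) : ℝ) * ‖clusterCentroid (C i) - c i‖ ^ 2
      = #(C j) * ‖clusterCentroid (C j) - x‖ ^ 2
        + #(C j') * ‖clusterCentroid (C j') - x‖ ^ 2 := by
    rw [Fintype.sum_eq_add j j' hjj' fun i hi => by simp [c, hi.1, hi.2]]
    simp [c]
  have hcost := scost_le_sum_clusters P cl c fun i => mem_image_of_mem c (mem_univ i)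
  rw [Fintype.sum_congr _ _ fun i => sum_norm_sub_sq_eq (C i) (c i), sum_add_distrib,
    hextra] at hcost
  have hOPT := kmOPT_le_scost_of_card_le P ⟨c j, mem_image_of_mem c (mem_univ j)⟩ hcard
  linarith

lemma card_mul_norm_sub_sq_le_scost {d : ℕ} {C S : Finset (Pt d)} {a x : Pt d}
    (hspread : 32 * ((∑ p ∈ C, ‖p - a‖ ^ 2) / #C) ≤ ‖a - x‖ ^ 2)
    (hfar : ‖a - x‖ ^ 2 ≤ 16 * pcost a S) :
    #C * ‖a - x‖ ^ 2 / 192 ≤ scost C S := by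
  have hcard : (0 : ℝ) ≤ #C := Nat.cast_nonneg _
  have hspread' : ∑ p ∈ C, ‖p - a‖ ^ 2 ≤ #C * (‖a - x‖ ^ 2 / 32) := by
    have hmean : ∑ p ∈ C, ‖p - a‖ ^ 2 = #C * ((∑ p ∈ C, ‖p - a‖ ^ 2) / #C) := by
      rcases C.eq_empty_or_nonempty with rfl | hC
      · simp
      · exact (mul_div_cancel₀ _ (by exact_mod_cast hC.card_pos.ne')).symm
    rw [hmean]
    exact mul_le_mul_of_nonneg_left (by linarith) hcard
  have hsum : #C * pcost a S ≤ 3 / 2 * ∑ p ∈ C, ‖p - a‖ ^ 2 + 3 * scost C S := by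
    have := sum_le_sum fun p (_ : p ∈ C) => pcost_le_add a p S
    rwa [sum_const, nsmul_eq_mul, sum_add_distrib, ← mul_sum, ← mul_sum] at this
  nlinarith [mul_le_mul_of_nonneg_left hfar hcard]

theorem stable_interaction_cost_general
    {d : ℕ} (k : ℕ) (β : ℝ) (P : Finset (Pt d)) (cl : Pt d → Fin k)
    (S : Finset (Pt d)) (x : Pt d)
    (hβ : 0 < β)
    (hstable : kmOPT P k * (1 + β) ≤ kmOPT P (k - 1)) :
    -- the clusters of the partition, their centroids and their average costs
    let Cj : Fin k → Finset (Pt d) := fun j => P.filter fun p => cl p = j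
    let a : Fin k → Pt d := fun j => (((Cj j).card : ℝ))⁻¹ • ∑ p ∈ Cj j, p
    let Δ : Fin k → ℝ := fun j => (∑ p ∈ Cj j, ‖p - a j‖ ^ 2) / ((Cj j).card : ℝ)
    -- the clustering is a (1+β/2)-approximation
    (∑ j : Fin k, ∑ p ∈ Cj j, ‖p - a j‖ ^ 2) ≤ (1 + β / 2) * kmOPT P k →
    -- `I(x)`: the clusters interacting with `x`
    let I : Finset (Fin k) := Finset.univ.filter fun j =>
      32 * Δ j ≤ ‖a j - x‖ ^ 2 ∧ ‖a j - x‖ ^ 2 ≤ 16 * pcost (a j) S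
    (1 / 768 : ℝ) * ((I.card : ℝ) - 1) * β * kmOPT P k ≤ scost P S := by
  intro Cj a Δ happrox I
  have hOPT := kmOPT_nonneg P k
  rcases le_or_gt #I 1 with hI | hI
  · have hI' : (#I : ℝ) ≤ 1 := by exact_mod_cast hI
    nlinarith [mul_nonneg (mul_nonneg (sub_nonneg.2 hI') hβ.le) hOPT, scost_nonneg P S]
  obtain ⟨j₀, hj₀, hmin⟩ := I.exists_min_image (fun j => #(Cj j) * ‖a j - x‖ ^ 2)
    (card_pos.1 (by omega))
  have hlow : ∀ j ∈ I.erase j₀, β / 4 * kmOPT P k / 192 ≤ scost (Cj j) S := by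
    intro j hj
    obtain ⟨hjj₀, hjI⟩ := mem_erase.1 hj
    have hmerge : β / 2 * kmOPT P k ≤ #(Cj j) * ‖a j - x‖ ^ 2 + #(Cj j₀) * ‖a j₀ - x‖ ^ 2 :=
      half_mul_kmOPT_le_merge_cost P hstable happrox hjj₀ x
    have hnear := card_mul_norm_sub_sq_le_scost (mem_filter.1 hjI).2.1 (mem_filter.1 hjI).2.2
    linarith [hmin j hjI]
  calc (1 / 768 : ℝ) * ((#I : ℝ) - 1) * β * kmOPT P k
      = #(I.erase j₀) • (β / 4 * kmOPT P k / 192) := by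
        rw [card_erase_of_mem hj₀, nsmul_eq_mul, Nat.cast_pred (by omega)]
        ring
    _ ≤ ∑ j ∈ I.erase j₀, scost (Cj j) S := card_nsmul_le_sum _ _ _ hlow
    _ ≤ ∑ j, scost (Cj j) S :=
        sum_le_sum_of_subset_of_nonneg (subset_univ _) fun j _ _ => scost_nonneg _ S
    _ = scost P S := (scost_eq_sum_clusters P cl S).symm

/-- For a β-stable instance, if a center `x ∈ S` interacts with many clusters
then `cost(P,S)` is large. -/
theorem stable_interaction_cost
    {d : ℕ} (k : ℕ) (β : ℝ) (P : Finset (Pt d)) (cl : Pt d → Fin k)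
    (S : Finset (Pt d)) (x : Pt d)
    (hβ : 0 < β)
    (hstable : kmOPT P k * (1 + β) ≤ kmOPT P (k - 1))
    (hS : S.card = k) (hx : x ∈ S) :
    -- the clusters of the partition, their centroids and their average costs
    let Cj : Fin k → Finset (Pt d) := fun j => P.filter fun p => cl p = j
    let a : Fin k → Pt d := fun j => (((Cj j).card : ℝ))⁻¹ • ∑ p ∈ Cj j, p
    let Δ : Fin k → ℝ := fun j => (∑ p ∈ Cj j, ‖p - a j‖ ^ 2) / ((Cj j).card : ℝ)
    -- the clustering is a (1+β/2)-approximation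
    (∑ j : Fin k, ∑ p ∈ Cj j, ‖p - a j‖ ^ 2) ≤ (1 + β / 2) * kmOPT P k →
    -- `I(x)`: the clusters interacting with `x`
    let I : Finset (Fin k) := Finset.univ.filter fun j =>
      32 * Δ j ≤ ‖a j - x‖ ^ 2 ∧ ‖a j - x‖ ^ 2 ≤ 16 * pcost (a j) S
    (1 / 768 : ℝ) * ((I.card : ℝ) - 1) * β * kmOPT P k ≤ scost P S :=
  stable_interaction_cost_general k β P cl S x hβ hstable
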